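/- Fix reals r > 0 and 0 ≤ a < b ≤ 1. For each integer d ≥ 2 let x_d be any nonzero point of ℝ^d. Then lim_{d→∞} (1/d) · ln( vol_d(B(x_d, r, a, b)) / v_d ) = ln( r √(1−a²) ), where vol_d is Lebesgue measure on ℝ^d. -/

import Mathlib

open MeasureTheory Filter

/-- `vball n` is the Lebesgue volume of the closed unit Euclidean ball in ℝⁿ. -/
noncomputable def vball (n : ℕ) : ℝ :=
  (volume (Metric.closedBall (0 : EuclideanSpace ℝ (Fin n)) 1)).toReal

/-- The ballSlice B(x, r, a, b) of the ball B(x, r). -/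
noncomputable def ballSlice (d : ℕ) (x : EuclideanSpace ℝ (Fin d)) (r a b : ℝ) :
    Set (EuclideanSpace ℝ (Fin d)) :=
  if 0 < a then
    {y | ‖y - x‖ ≤ r ∧ a * r < (inner ℝ (y - x) (‖x‖⁻¹ • x) : ℝ) ∧
      (inner ℝ (y - x) (‖x‖⁻¹ • x) : ℝ) ≤ b * r}
  else
    {y | ‖y - x‖ ≤ r ∧ (inner ℝ (y - x) (‖x‖⁻¹ • x) : ℝ) ≤ b * r}

/-!
Translate by `x` and write `t = ⟪z, x / ‖x‖⟫` for the axial coordinate. The slice lies in the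
solid cylinder `-r ≤ t ≤ r` of radius `r √(1 - a²)` (since `t > a r` forces the distance to the
axis to be at most `r √(1 - a²)`), and for every `a < a' ≤ b` it contains the solid cylinder
`a r < t ≤ a' r` of radius `r √(1 - a'²)`. In `ℝ^(m+1)` a solid cylinder of length `ℓ` and
radius `ρ` has volume `ℓ ρ^m v_m`, and comparing the unit ball with such cylinders gives
`v_m / (m + 1)² ≤ v_(m+1) ≤ 2 v_m`. So `vol(slice) / v_d` lies between `c ρ_{a'}^d` and
`C d² ρ_a^d`, whose normalised logarithms tend to `log ρ_{a'}` and `log ρ_a`; let `a' ↓ a`.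
-/

open Metric Set Topology
open scoped RealInnerProductSpace

section SolidCylinder

variable {E F : Type*} [NormedAddCommGroup E] [InnerProductSpace ℝ E]
  [NormedAddCommGroup F] [InnerProductSpace ℝ F]

/-- For a unit vector `u`, `‖z‖ ^ 2 - ⟪z, u⟫ ^ 2` is the squared distance from `z` to the axis
`ℝ ∙ u`. -/
def solidCylinder (u : E) (s : Set ℝ) (ρ : ℝ) : Set E :=
  {z | ⟪z, u⟫ ∈ s ∧ ‖z‖ ^ 2 - ⟪z, u⟫ ^ 2 ≤ ρ ^ 2}

theorem LinearIsometryEquiv.preimage_solidCylinder (e : E ≃ₗᵢ[ℝ] F) (u : E) (s : Set ℝ)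
    (ρ : ℝ) : e ⁻¹' solidCylinder (e u) s ρ = solidCylinder u s ρ := by
  ext z
  simp [solidCylinder]

theorem volume_solidCylinder_of_norm_eq [FiniteDimensional ℝ E] [MeasurableSpace E]
    [BorelSpace E] {u v : E} (huv : ‖u‖ = ‖v‖) (s : Set ℝ) (ρ : ℝ) :
    volume (solidCylinder u s ρ) = volume (solidCylinder v s ρ) := by
  set e := (ℝ ∙ (u - v))ᗮ.reflection
  rw [← Submodule.reflection_sub huv, ← e.preimage_solidCylinder u]
  exact MeasurePreserving.measure_preimage_equiv (f := e.toMeasurableEquiv) e.measurePreserving _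

theorem volume_solidCylinder_single_zero {m : ℕ} {s : Set ℝ} (hs : MeasurableSet s) {ρ : ℝ}
    (hρ : 0 ≤ ρ) :
    volume (solidCylinder (EuclideanSpace.single 0 1 : EuclideanSpace ℝ (Fin (m + 1))) s ρ) =
      volume s * volume (closedBall (0 : EuclideanSpace ℝ (Fin m)) ρ) := by
  -- `φ z = (z 0, (z 1, …, z m))` splits off the axial coordinate.
  set φ : EuclideanSpace ℝ (Fin (m + 1)) → ℝ × EuclideanSpace ℝ (Fin m) :=
    fun z => Prod.map id (WithLp.toLp 2) (MeasurableEquiv.piFinSuccAbove (fun _ => ℝ) 0 z.ofLp)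
  have hφ : MeasurePreserving φ := by
    rw [Measure.volume_eq_prod]
    exact ((MeasurePreserving.id volume).prod (PiLp.volume_preserving_toLp (Fin m))).comp
      ((volume_preserving_piFinSuccAbove (fun _ => ℝ) 0).comp (PiLp.volume_preserving_ofLp _))
  have hpre : solidCylinder (EuclideanSpace.single 0 1) s ρ = φ ⁻¹' (s ×ˢ closedBall 0 ρ) := by
    ext z
    simp [φ, solidCylinder, EuclideanSpace.inner_single_right, EuclideanSpace.norm_sq_eq,
      Fin.sum_univ_succ, Fin.tail, ← sq_le_sq₀ (norm_nonneg _) hρ]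
  rw [hpre, hφ.measure_preimage (hs.prod measurableSet_closedBall).nullMeasurableSet,
    Measure.volume_eq_prod, Measure.prod_prod]

theorem volume_solidCylinder {m : ℕ} {u : EuclideanSpace ℝ (Fin (m + 1))} (hu : ‖u‖ = 1)
    {s : Set ℝ} (hs : MeasurableSet s) {ρ : ℝ} (hρ : 0 ≤ ρ) :
    volume (solidCylinder u s ρ) =
      volume s * volume (closedBall (0 : EuclideanSpace ℝ (Fin m)) ρ) := by
  rw [volume_solidCylinder_of_norm_eq (v := EuclideanSpace.single 0 1) (by simp [hu]),
    volume_solidCylinder_single_zero hs hρ]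

theorem volume_solidCylinder_ne_top {m : ℕ} {u : EuclideanSpace ℝ (Fin (m + 1))} (hu : ‖u‖ = 1)
    {s : Set ℝ} (hs : MeasurableSet s) (hs_fin : volume s ≠ ⊤) {ρ : ℝ} (hρ : 0 ≤ ρ) :
    volume (solidCylinder u s ρ) ≠ ⊤ := by
  rw [volume_solidCylinder hu hs hρ]
  exact ENNReal.mul_ne_top hs_fin measure_closedBall_lt_top.ne

theorem measureReal_solidCylinder {m : ℕ} {u : EuclideanSpace ℝ (Fin (m + 1))} (hu : ‖u‖ = 1)
    {s : Set ℝ} (hs : MeasurableSet s) {ρ : ℝ} (hρ : 0 ≤ ρ) :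
    volume.real (solidCylinder u s ρ) = volume.real s * ρ ^ m * vball m := by
  rw [measureReal_def, volume_solidCylinder hu hs hρ, Measure.addHaar_closedBall' _ _ hρ,
    finrank_euclideanSpace_fin, ENNReal.toReal_mul, ENNReal.toReal_mul,
    ENNReal.toReal_ofReal (pow_nonneg hρ m), vball, measureReal_def, mul_assoc]

theorem closedBall_subset_solidCylinder {u : E} (hu : ‖u‖ ≤ 1) (r : ℝ) :
    closedBall 0 r ⊆ solidCylinder u (Icc (-r) r) r := by
  intro z hz
  rw [mem_closedBall_zero_iff] at hz
  have hzu : |⟪z, u⟫| ≤ r :=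
    (abs_real_inner_le_norm z u).trans (by nlinarith [norm_nonneg z, norm_nonneg u])
  exact ⟨abs_le.1 hzu, by nlinarith [norm_nonneg z, sq_nonneg ⟪z, u⟫]⟩

theorem solidCylinder_subset_closedBall (u : E) {h : ℝ} (h0 : 0 ≤ h) (h1 : h ≤ 1) :
    solidCylinder u (Icc 0 h) (1 - h) ⊆ closedBall 0 1 := by
  rintro z ⟨⟨hz0, hzh⟩, hz⟩
  rw [mem_closedBall_zero_iff, ← sq_le_one_iff₀ (norm_nonneg z)]
  nlinarith

end SolidCylinder

theorem vball_pos (n : ℕ) : 0 < vball n :=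
  ENNReal.toReal_pos (measure_closedBall_pos _ _ one_pos).ne' measure_closedBall_lt_top.ne

theorem vball_succ_le_two_mul (m : ℕ) : vball (m + 1) ≤ 2 * vball m := by
  obtain ⟨u, hu⟩ : ∃ u : EuclideanSpace ℝ (Fin (m + 1)), ‖u‖ = 1 :=
    ⟨EuclideanSpace.single 0 1, by simp⟩
  calc vball (m + 1) = volume.real (closedBall (0 : EuclideanSpace ℝ (Fin (m + 1))) 1) := rfl
    _ ≤ volume.real (solidCylinder u (Icc (-1) 1) 1) :=
      measureReal_mono (closedBall_subset_solidCylinder hu.le 1)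
        (volume_solidCylinder_ne_top hu measurableSet_Icc measure_Icc_lt_top.ne zero_le_one)
    _ = 2 * vball m := by
      rw [measureReal_solidCylinder hu measurableSet_Icc zero_le_one,
        Real.volume_real_Icc_of_le (by norm_num)]
      norm_num

theorem mul_pow_mul_vball_le_vball_succ (m : ℕ) {h : ℝ} (h0 : 0 ≤ h) (h1 : h ≤ 1) :
    h * (1 - h) ^ m * vball m ≤ vball (m + 1) := by
  obtain ⟨u, hu⟩ : ∃ u : EuclideanSpace ℝ (Fin (m + 1)), ‖u‖ = 1 :=
    ⟨EuclideanSpace.single 0 1, by simp⟩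
  calc h * (1 - h) ^ m * vball m = volume.real (solidCylinder u (Icc 0 h) (1 - h)) := by
        rw [measureReal_solidCylinder hu measurableSet_Icc (by linarith),
          Real.volume_real_Icc_of_le h0, sub_zero]
    _ ≤ vball (m + 1) :=
      measureReal_mono (solidCylinder_subset_closedBall u h0 h1) measure_closedBall_lt_top.ne

theorem vball_le_sq_mul_vball_succ (m : ℕ) : vball m ≤ ((m : ℝ) + 1) ^ 2 * vball (m + 1) := by
  have hm : (0 : ℝ) < m + 1 := by positivity
  set h : ℝ := 1 / ((m : ℝ) + 1) with h_def
  have h1 : h ≤ 1 := by rw [h_def, div_le_one hm]; linarith [m.cast_nonneg (α := ℝ)]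
  have bernoulli : h ≤ (1 - h) ^ m :=
    calc h = 1 + m * -h := by rw [h_def]; field_simp; ring
      _ ≤ (1 + -h) ^ m := one_add_mul_le_pow (by linarith) m
      _ = (1 - h) ^ m := by ring
  calc vball m = ((m : ℝ) + 1) ^ 2 * (h * h * vball m) := by rw [h_def]; field_simp
    _ ≤ ((m : ℝ) + 1) ^ 2 * (h * (1 - h) ^ m * vball m) := by
      have := (vball_pos m).le
      gcongr
    _ ≤ ((m : ℝ) + 1) ^ 2 * vball (m + 1) := by
      gcongr
      exact mul_pow_mul_vball_le_vball_succ m (by positivity) h1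

section BallSlice

variable {d : ℕ} {x : EuclideanSpace ℝ (Fin d)} {r a b : ℝ}

theorem mem_ballSlice {y : EuclideanSpace ℝ (Fin d)} :
    y ∈ ballSlice d x r a b ↔ ‖y - x‖ ≤ r ∧ (0 < a → a * r < ⟪y - x, ‖x‖⁻¹ • x⟫) ∧
      ⟪y - x, ‖x‖⁻¹ • x⟫ ≤ b * r := by
  unfold ballSlice
  split_ifs with ha <;> simp [ha]

theorem ballSlice_subset_closedBall : ballSlice d x r a b ⊆ closedBall x r :=
  fun _ hy => mem_closedBall_iff_norm.2 (mem_ballSlice.1 hy).1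

theorem preimage_add_ballSlice_subset_solidCylinder (hx : x ≠ 0) (ha : 0 ≤ a) (ha1 : a ≤ 1) :
    (· + x) ⁻¹' ballSlice d x r a b ⊆
      solidCylinder (‖x‖⁻¹ • x) (Icc (-r) r) (r * √(1 - a ^ 2)) := by
  intro z hz
  simp only [mem_preimage, mem_ballSlice, add_sub_cancel_right] at hz
  obtain ⟨hzr, hlow, -⟩ := hz
  set t := ⟪z, ‖x‖⁻¹ • x⟫
  have ht : |t| ≤ ‖z‖ := by
    have hu : ‖‖x‖⁻¹ • x‖ = 1 := norm_smul_inv_norm hx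
    simpa [hu] using abs_real_inner_le_norm z (‖x‖⁻¹ • x)
  have hat : (a * r) ^ 2 ≤ t ^ 2 := by
    rcases ha.eq_or_lt with rfl | ha
    · simp [sq_nonneg]
    · have := hlow ha
      nlinarith [mul_nonneg ha.le (norm_nonneg z |>.trans hzr)]
  refine ⟨abs_le.1 (ht.trans hzr), ?_⟩
  rw [mul_pow, Real.sq_sqrt (by nlinarith)]
  nlinarith [norm_nonneg z]

theorem solidCylinder_subset_preimage_add_ballSlice {a' : ℝ} (hr : 0 ≤ r) (ha : 0 ≤ a)
    (ha'b : a' ≤ b) (ha'1 : a' ≤ 1) :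
    solidCylinder (‖x‖⁻¹ • x) (Ioc (a * r) (a' * r)) (r * √(1 - a' ^ 2)) ⊆
      (· + x) ⁻¹' ballSlice d x r a b := by
  rintro z ⟨⟨hat, hta'⟩, hz⟩
  set t := ⟪z, ‖x‖⁻¹ • x⟫
  have ht0 : 0 ≤ t := (mul_nonneg ha hr).trans hat.le
  have ha'0 : 0 ≤ a' := by nlinarith
  rw [mul_pow, Real.sq_sqrt (by nlinarith)] at hz
  simp only [mem_preimage, mem_ballSlice, add_sub_cancel_right]
  refine ⟨?_, fun _ => hat, hta'.trans (mul_le_mul_of_nonneg_right ha'b hr)⟩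
  rw [← sq_le_sq₀ (norm_nonneg z) hr]
  nlinarith [mul_le_mul hta' hta' ht0 (mul_nonneg ha'0 hr)]

end BallSlice

theorem tendsto_inv_mul_log_mul_pow (k : ℕ) {C ρ : ℝ} (hC : 0 < C) (hρ : 0 < ρ) :
    Tendsto (fun d : ℕ => (1 / (d : ℝ)) * Real.log (C * (d : ℝ) ^ k * ρ ^ d)) atTop
      (𝓝 (Real.log ρ)) := by
  have hlog : Tendsto (fun d : ℕ => Real.log d / d) atTop (𝓝 0) :=
    Real.isLittleO_log_id_atTop.tendsto_div_nhds_zero.comp tendsto_natCast_atTop_atTop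
  have hlim := ((tendsto_const_div_atTop_nhds_zero_nat (Real.log C)).add
    (hlog.const_mul (k : ℝ))).add_const (Real.log ρ)
  rw [mul_zero, add_zero, zero_add] at hlim
  refine hlim.congr' ?_
  filter_upwards [eventually_ge_atTop 1] with d hd
  have hd' : (0 : ℝ) < d := by exact_mod_cast hd
  rw [Real.log_mul (by positivity) (by positivity), Real.log_mul (by positivity) (by positivity),
    Real.log_pow, Real.log_pow]
  field_simp

theorem tendsto_inv_mul_log_of_bounds {g : ℕ → ℝ} {C ρ : ℝ} (k : ℕ) (hC : 0 < C) (hρ : 0 < ρ)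
    (upper : ∀ᶠ d in atTop, g d ≤ C * (d : ℝ) ^ k * ρ ^ d)
    (lower : ∀ ℓ < Real.log ρ, ∃ c σ : ℝ, 0 < c ∧ 0 < σ ∧ ℓ < Real.log σ ∧
      ∀ᶠ d in atTop, c * σ ^ d ≤ g d) :
    Tendsto (fun d : ℕ => (1 / (d : ℝ)) * Real.log (g d)) atTop (𝓝 (Real.log ρ)) := by
  have inv_mul_log_le {d : ℕ} {y z : ℝ} (hy : 0 < y) (hyz : y ≤ z) :
      (1 / (d : ℝ)) * Real.log y ≤ (1 / (d : ℝ)) * Real.log z :=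
    mul_le_mul_of_nonneg_left (Real.log_le_log hy hyz) (by positivity)
  refine tendsto_order.2 ⟨fun ℓ hℓ => ?_, fun ℓ hℓ => ?_⟩
  · obtain ⟨c, σ, hc, hσ, hℓσ, hcσ⟩ := lower ℓ hℓ
    have hlim := tendsto_inv_mul_log_mul_pow 0 hc hσ
    simp only [pow_zero, mul_one] at hlim
    filter_upwards [hlim.eventually_const_lt hℓσ, hcσ] with d hℓd hd
    exact hℓd.trans_le (inv_mul_log_le (by positivity) hd)
  · obtain ⟨c, σ, hc, hσ, -, hcσ⟩ := lower (Real.log ρ - 1) (by linarith)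
    filter_upwards [(tendsto_inv_mul_log_mul_pow k hC hρ).eventually_lt_const hℓ, upper, hcσ]
      with d hdℓ hd hgd
    exact (inv_mul_log_le ((by positivity : 0 < c * σ ^ d).trans_le hgd) hd).trans_lt hdℓ

section VolumeBounds

variable {m : ℕ} {x : EuclideanSpace ℝ (Fin (m + 1))} {r a b : ℝ}

theorem measureReal_ballSlice_le (hx : x ≠ 0) (hr : 0 ≤ r) (ha : 0 ≤ a) (ha1 : a ≤ 1) :
    volume.real (ballSlice (m + 1) x r a b) ≤ 2 * r * (r * √(1 - a ^ 2)) ^ m * vball m := by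
  have hu : ‖‖x‖⁻¹ • x‖ = 1 := norm_smul_inv_norm hx
  have hρ : 0 ≤ r * √(1 - a ^ 2) := by positivity
  calc volume.real (ballSlice (m + 1) x r a b)
      = volume.real ((· + x) ⁻¹' ballSlice (m + 1) x r a b) := by
        simp only [measureReal_def, measure_preimage_add_right]
    _ ≤ volume.real (solidCylinder (‖x‖⁻¹ • x) (Icc (-r) r) (r * √(1 - a ^ 2))) :=
      measureReal_mono (preimage_add_ballSlice_subset_solidCylinder hx ha ha1)
        (volume_solidCylinder_ne_top hu measurableSet_Icc measure_Icc_lt_top.ne hρ)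
    _ = 2 * r * (r * √(1 - a ^ 2)) ^ m * vball m := by
      rw [measureReal_solidCylinder hu measurableSet_Icc hρ,
        Real.volume_real_Icc_of_le (by linarith)]
      ring

theorem le_measureReal_ballSlice {a' : ℝ} (hx : x ≠ 0) (hr : 0 ≤ r) (ha : 0 ≤ a) (haa' : a ≤ a')
    (ha'b : a' ≤ b) (ha'1 : a' ≤ 1) :
    (a' - a) * r * (r * √(1 - a' ^ 2)) ^ m * vball m ≤ volume.real (ballSlice (m + 1) x r a b) := by
  have hu : ‖‖x‖⁻¹ • x‖ = 1 := norm_smul_inv_norm hx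
  have hfin : volume ((· + x) ⁻¹' ballSlice (m + 1) x r a b) ≠ ⊤ := by
    rw [measure_preimage_add_right]
    exact ((measure_mono ballSlice_subset_closedBall).trans_lt measure_closedBall_lt_top).ne
  calc (a' - a) * r * (r * √(1 - a' ^ 2)) ^ m * vball m
      = volume.real (solidCylinder (‖x‖⁻¹ • x) (Ioc (a * r) (a' * r)) (r * √(1 - a' ^ 2))) := by
        rw [measureReal_solidCylinder hu measurableSet_Ioc (by positivity),
          Real.volume_real_Ioc_of_le (mul_le_mul_of_nonneg_right haa' hr)]
        ring
    _ ≤ volume.real ((· + x) ⁻¹' ballSlice (m + 1) x r a b) :=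
      measureReal_mono (solidCylinder_subset_preimage_add_ballSlice hr ha ha'b ha'1) hfin
    _ = volume.real (ballSlice (m + 1) x r a b) := by
        simp only [measureReal_def, measure_preimage_add_right]

theorem measureReal_ballSlice_div_vball_le (hx : x ≠ 0) (hr : 0 < r) (ha : 0 ≤ a) (ha1 : a < 1) :
    volume.real (ballSlice (m + 1) x r a b) / vball (m + 1) ≤
      2 * r / (r * √(1 - a ^ 2)) * ((m + 1 : ℕ) : ℝ) ^ 2 * (r * √(1 - a ^ 2)) ^ (m + 1) := by
  have hρ : 0 < r * √(1 - a ^ 2) := mul_pos hr (Real.sqrt_pos.2 (by nlinarith))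
  set ρ := r * √(1 - a ^ 2)
  rw [div_le_iff₀ (vball_pos _)]
  calc volume.real (ballSlice (m + 1) x r a b)
      ≤ 2 * r * ρ ^ m * vball m := measureReal_ballSlice_le hx hr.le ha ha1.le
    _ ≤ 2 * r * ρ ^ m * (((m : ℝ) + 1) ^ 2 * vball (m + 1)) := by
      gcongr
      exact vball_le_sq_mul_vball_succ m
    _ = _ := by
      push_cast
      field_simp
      ring

theorem le_measureReal_ballSlice_div_vball {a' : ℝ} (hx : x ≠ 0) (hr : 0 < r) (ha : 0 ≤ a)
    (haa' : a ≤ a') (ha'b : a' ≤ b) (ha'1 : a' < 1) :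
    (a' - a) * r / (2 * (r * √(1 - a' ^ 2))) * (r * √(1 - a' ^ 2)) ^ (m + 1) ≤
      volume.real (ballSlice (m + 1) x r a b) / vball (m + 1) := by
  have hρ : 0 < r * √(1 - a' ^ 2) := mul_pos hr (Real.sqrt_pos.2 (by nlinarith))
  set ρ := r * √(1 - a' ^ 2)
  rw [le_div_iff₀ (vball_pos _)]
  calc (a' - a) * r / (2 * ρ) * ρ ^ (m + 1) * vball (m + 1)
      = (a' - a) * r * ρ ^ m * (vball (m + 1) / 2) := by
        rw [pow_succ]
        field_simp
    _ ≤ (a' - a) * r * ρ ^ m * vball m := by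
      have : 0 ≤ a' - a := by linarith
      gcongr
      linarith [vball_succ_le_two_mul m]
    _ ≤ volume.real (ballSlice (m + 1) x r a b) :=
      le_measureReal_ballSlice hx hr.le ha haa' ha'b ha'1.le

end VolumeBounds

/-- Fix r > 0 and 0 ≤ a < b ≤ 1. For each d ≥ 2 let x_d be any nonzero point of ℝ^d. Then
(1/d)·ln(vol_d(B(x_d,r,a,b))/v_d) → ln(r√(1−a²)) as d → ∞. -/
theorem limit_log_volume_slice (r a b : ℝ) (hr : 0 < r) (ha : 0 ≤ a) (hab : a < b) (hb : b ≤ 1)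
    (x : (d : ℕ) → EuclideanSpace ℝ (Fin d)) (hx : ∀ d, 2 ≤ d → x d ≠ 0) :
    Tendsto (fun d : ℕ =>
        (1 / (d : ℝ)) * Real.log ((volume (ballSlice d (x d) r a b)).toReal / vball d))
      atTop (nhds (Real.log (r * Real.sqrt (1 - a ^ 2)))) := by
  have hρ : ∀ s, 0 ≤ s → s < 1 → 0 < r * √(1 - s ^ 2) := fun s hs0 hs1 =>
    mul_pos hr (Real.sqrt_pos.2 (by nlinarith))
  have ha1 : a < 1 := hab.trans_le hb
  refine tendsto_inv_mul_log_of_bounds (C := 2 * r / (r * √(1 - a ^ 2))) 2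
    (div_pos (by positivity) (hρ a ha ha1)) (hρ a ha ha1) ?_ fun ℓ hℓ => ?_
  · filter_upwards [eventually_ge_atTop 2] with d hd
    obtain ⟨m, rfl⟩ := Nat.exists_eq_add_of_le' (show 1 ≤ d by omega)
    exact measureReal_ballSlice_div_vball_le (hx _ hd) hr ha ha1
  · obtain ⟨a', hℓa', haa', ha'b⟩ : ∃ a', ℓ < Real.log (r * √(1 - a' ^ 2)) ∧ a < a' ∧ a' < b := by
      have hcont : ContinuousAt (fun s => Real.log (r * √(1 - s ^ 2))) a :=
        (continuousAt_const.mul (by fun_prop)).log (hρ a ha ha1).ne'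
      exact ((eventually_nhdsWithin_of_eventually_nhds (hcont.eventually_const_lt hℓ)).and
        (Ioo_mem_nhdsGT hab)).exists
    have ha'1 : a' < 1 := ha'b.trans_le hb
    have hρ' := hρ a' (ha.trans haa'.le) ha'1
    refine ⟨(a' - a) * r / (2 * (r * √(1 - a' ^ 2))), _,
      div_pos (mul_pos (sub_pos.2 haa') hr) (mul_pos two_pos hρ'), hρ', hℓa', ?_⟩
    filter_upwards [eventually_ge_atTop 2] with d hd
    obtain ⟨m, rfl⟩ := Nat.exists_eq_add_of_le' (show 1 ≤ d by omega)
    exact le_measureReal_ballSlice_div_vball (hx _ hd) hr ha haa'.le ha'b.le ha'1
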